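/- For every μ ∈ M_l and every integer T ≥ 1, writing S_T = ∑_{t=1}^{T} (∑_{ν∈M_l} J̄_{T,t+1,μ,ν})², the asymptotic risk ratio is sandwiched as follows: α · S_T ≤ Tr(Σ_{T,μ,μ}) / Tr(V*) ≤ (ᾱ/α) · (S_T + 1). In particular, the model at node μ collapses (i.e., limsup_{T→∞} Tr(Σ_{T,μ,μ})/Tr(V*) = ∞) if and only if limsup_{T→∞} S_T = ∞. -/
import Mathlib


open Matrix Finset Filter

noncomputable section

/-- In-neighbourhood of `μ` in the directed graph with edge set `E`. -/
def Nin {K : ℕ} (E : Finset (Fin K × Fin K)) (μ : Fin K) : Finset (Fin K) :=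
  Finset.univ.filter (fun ν => (ν, μ) ∈ E)

/-- The set of learning models (those with at least one incoming edge). -/
def Ml {K : ℕ} (E : Finset (Fin K × Fin K)) : Finset (Fin K) :=
  Finset.univ.filter (fun μ => Nin E μ ≠ ∅)

/-- The set of models with no incoming edge (stable data sources). -/
def Mu {K : ℕ} (E : Finset (Fin K × Fin K)) : Finset (Fin K) :=
  Finset.univ.filter (fun μ => Nin E μ = ∅)

/-- The edge relation: `EdgeRel E a b` iff `(a, b) ∈ E`. -/
def EdgeRel {K : ℕ} (E : Finset (Fin K × Fin K)) : Fin K → Fin K → Prop :=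
  fun a b => (a, b) ∈ E

open Classical in
/-- Models in `M_l` not reachable by a directed path from any node of `M_u`. -/
def MlInf {K : ℕ} (E : Finset (Fin K × Fin K)) : Finset (Fin K) :=
  (Ml E).filter (fun μ => ∀ ν ∈ Mu E, ¬ Relation.TransGen (EdgeRel E) ν μ)

open Classical in
/-- Models in `M_l^∞` together with models reachable from some node of `M_l^∞`. -/
def Mlc {K : ℕ} (E : Finset (Fin K × Fin K)) : Finset (Fin K) :=
  (Ml E).filter (fun μ => μ ∈ MlInf E ∨ ∃ ν ∈ MlInf E, Relation.TransGen (EdgeRel E) ν μ)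

/-- The non-collapsing learning models. -/
def Mlnc {K : ℕ} (E : Finset (Fin K × Fin K)) : Finset (Fin K) := Ml E \ Mlc E

/-- The total limiting proportion `w_{t,ν} = ∑_{m ∈ Nin(ν)} p̄_{t,m→ν}`. -/
def wgt {K : ℕ} (E : Finset (Fin K × Fin K)) (pbar : ℕ → Fin K → Fin K → ℝ)
    (t : ℕ) (ν : Fin K) : ℝ :=
  ∑ m ∈ Nin E ν, pbar t m ν

/-- The row-stochastic matrix `P̄_t`: `P̄_{t,μ,ν} = p̄_{t,ν→μ}/w_{t,μ}` if `μ ∈ M_l` and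
`ν ∈ Nin(μ)`, `P̄_{t,μ,μ} = 1` if `μ ∈ M_u`, and `0` otherwise. -/
def Pbar {K : ℕ} (E : Finset (Fin K × Fin K)) (pbar : ℕ → Fin K → Fin K → ℝ)
    (t : ℕ) : Matrix (Fin K) (Fin K) ℝ :=
  Matrix.of fun μ ν =>
    if μ ∈ Ml E then (if ν ∈ Nin E μ then pbar t ν μ / wgt E pbar t μ else 0)
    else (if μ = ν then 1 else 0)

/-- `Jmat P t s = P_t P_{t−1} ⋯ P_s` (equal to `I` when `s = t + 1`). -/
def Jmat {K : ℕ} (P : ℕ → Matrix (Fin K) (Fin K) ℝ) (t s : ℕ) : Matrix (Fin K) (Fin K) ℝ :=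
  ((List.range' s (t + 1 - s)).reverse.map P).prod

/-- The Kronecker product `Q ⊗ I_d`, as a `dK × dK` matrix with blocks indexed by `Fin K`. -/
def kronId {K d : ℕ} (Q : Matrix (Fin K) (Fin K) ℝ) :
    Matrix (Fin K × Fin d) (Fin K × Fin d) ℝ :=
  Matrix.of fun p r => Q p.1 r.1 * (if p.2 = r.2 then 1 else 0)

/-- The block matrix `Σ_0`: `Σ_{0,μ,ν} = (1/p̄_{0,μ}) V*` if `μ = ν ∉ M_nature`, else `0`. -/
def Sigma0 {K d : ℕ} (Mnature : Finset (Fin K)) (p0 : Fin K → ℝ)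
    (Vstar : Matrix (Fin d) (Fin d) ℝ) : Matrix (Fin K × Fin d) (Fin K × Fin d) ℝ :=
  Matrix.of fun p r =>
    if p.1 = r.1 ∧ p.1 ∉ Mnature then (1 / p0 p.1) * Vstar p.2 r.2 else 0

/-- The block matrix `V_t`: `V_{t,μ,ν} = (q_{t,μ∩ν}/(w_{t,μ}w_{t,ν})) V*` if `μ, ν ∈ M_l`,
else `0`. -/
def Vt {K d : ℕ} (E : Finset (Fin K × Fin K)) (pbar : ℕ → Fin K → Fin K → ℝ)
    (q : ℕ → Fin K → Fin K → ℝ) (Vstar : Matrix (Fin d) (Fin d) ℝ) (t : ℕ) :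
    Matrix (Fin K × Fin d) (Fin K × Fin d) ℝ :=
  Matrix.of fun p r =>
    if p.1 ∈ Ml E ∧ r.1 ∈ Ml E then
      (q t p.1 r.1 / (wgt E pbar t p.1 * wgt E pbar t r.1)) * Vstar p.2 r.2
    else 0

end

section aux
variable {K d : ℕ}

lemma kronId_one : kronId (d := d) (1 : Matrix (Fin K) (Fin K) ℝ) = 1 := by
  ext ⟨μ, a⟩ ⟨ν, b⟩
  simp only [kronId, Matrix.of_apply, Matrix.one_apply, Prod.mk.injEq]
  split_ifs with h1 h2 h3 <;> simp_all

lemma kronId_mul (A B : Matrix (Fin K) (Fin K) ℝ) :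
    kronId (d := d) (A * B) = kronId A * kronId B := by
  ext ⟨μ, a⟩ ⟨ν, b⟩
  simp only [kronId, Matrix.of_apply, Matrix.mul_apply, Fintype.sum_prod_type]
  simp only [mul_ite, ite_mul, mul_one, mul_zero, zero_mul, one_mul,
    Finset.sum_ite_eq, Finset.mem_univ, if_true, Finset.sum_ite_irrel, Finset.sum_const_zero]
  simp only [Finset.sum_ite_eq', Finset.mem_univ, if_true]
  split_ifs <;> simp

lemma kronId_transpose (A : Matrix (Fin K) (Fin K) ℝ) :
    kronId (d := d) Aᵀ = (kronId A)ᵀ := by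
  ext ⟨μ, a⟩ ⟨ν, b⟩
  simp only [kronId, Matrix.of_apply, Matrix.transpose_apply, eq_comm]

lemma listprod_nonneg (L : List (Matrix (Fin K) (Fin K) ℝ))
    (h : ∀ A ∈ L, ∀ i j, 0 ≤ A i j) : ∀ i j, 0 ≤ L.prod i j := by
  induction L with
  | nil => intro i j; simp [Matrix.one_apply]; split_ifs <;> norm_num
  | cons A L ih =>
    intro i j
    rw [List.prod_cons, Matrix.mul_apply]
    refine Finset.sum_nonneg fun k _ => mul_nonneg (h A (by simp) i k) (ih (fun B hB => h B (by simp [hB])) k j)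

lemma listprod_rowsum (L : List (Matrix (Fin K) (Fin K) ℝ))
    (h : ∀ A ∈ L, ∀ i, ∑ j, A i j = 1) : ∀ i, ∑ j, L.prod i j = 1 := by
  induction L with
  | nil => intro i; simp [Matrix.one_apply]
  | cons A L ih =>
    intro i
    simp only [List.prod_cons, Matrix.mul_apply]
    rw [Finset.sum_comm]
    have : ∀ k, ∑ j, A i k * L.prod k j = A i k := by
      intro k; rw [← Finset.mul_sum, ih (fun B hB => h B (by simp [hB])) k, mul_one]
    simp only [this]
    exact h A (by simp) i

lemma Jmat_self (P : ℕ → Matrix (Fin K) (Fin K) ℝ) (t : ℕ) : Jmat P t (t + 1) = 1 := by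
  simp [Jmat]

lemma Jmat_succ (P : ℕ → Matrix (Fin K) (Fin K) ℝ) {t s : ℕ} (h : s ≤ t + 1) :
    Jmat P (t + 1) s = P (t + 1) * Jmat P t s := by
  have h1 : t + 1 + 1 - s = (t + 1 - s) + 1 := by omega
  have h2 : s + (t + 1 - s) = t + 1 := by omega
  rw [Jmat, h1, List.range'_1_concat, List.reverse_append, h2]
  simp [Jmat]

lemma conj_trace (A : Matrix (Fin K) (Fin K) ℝ)
    (M : Matrix (Fin K × Fin d) (Fin K × Fin d) ℝ) (μ : Fin K) :
    ∑ a : Fin d, (kronId (d := d) A * M * (kronId (d := d) A)ᵀ) (μ, a) (μ, a)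
      = ∑ ν1 : Fin K, ∑ ν2 : Fin K, A μ ν1 * A μ ν2 * ∑ a : Fin d, M (ν1, a) (ν2, a) := by
  simp only [Matrix.mul_apply, Matrix.transpose_apply, kronId, Matrix.of_apply,
    Fintype.sum_prod_type]
  simp only [mul_ite, ite_mul, mul_one, mul_zero, zero_mul, one_mul,
    Finset.sum_ite_eq, Finset.sum_ite_eq', Finset.mem_univ, if_true, Finset.sum_const_zero]
  simp only [Finset.sum_mul, Finset.mul_sum]
  rw [Finset.sum_comm]
  have h1 : ∀ y : Fin K, (∑ x : Fin d, ∑ i : Fin K, A μ i * M (i, x) (y, x) * A μ y)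
      = ∑ i : Fin K, ∑ x : Fin d, A μ i * M (i, x) (y, x) * A μ y := fun y => Finset.sum_comm
  simp only [h1]
  rw [Finset.sum_comm]
  exact Finset.sum_congr rfl fun ν1 _ => Finset.sum_congr rfl fun ν2 _ =>
    Finset.sum_congr rfl fun a _ => by ring

end aux

section aux2
variable {K d : ℕ}

lemma mem_Nin_iff {E : Finset (Fin K × Fin K)} {m ν : Fin K} :
    m ∈ Nin E ν ↔ (m, ν) ∈ E := by simp [Nin]

lemma mem_Ml_iff {E : Finset (Fin K × Fin K)} {ν : Fin K} :
    ν ∈ Ml E ↔ (Nin E ν).Nonempty := by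
  simp [Ml, Finset.nonempty_iff_ne_empty]

lemma wgt_ge {E : Finset (Fin K × Fin K)} {pbar : ℕ → Fin K → Fin K → ℝ} {α : ℝ}
    {t : ℕ} (hpα : ∀ m ν₀ : Fin K, (m, ν₀) ∈ E → α ≤ pbar t m ν₀) (hα : 0 ≤ α)
    {ν : Fin K} (hν : ν ∈ Ml E) : α ≤ wgt E pbar t ν := by
  obtain ⟨m, hm⟩ := mem_Ml_iff.mp hν
  calc α ≤ pbar t m ν := hpα m ν (mem_Nin_iff.mp hm)
    _ ≤ wgt E pbar t ν := Finset.single_le_sum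
        (fun i hi => le_trans hα (hpα i ν (mem_Nin_iff.mp hi))) hm

lemma wgt_total {E : Finset (Fin K × Fin K)} {pbar : ℕ → Fin K → Fin K → ℝ} (t : ℕ) :
    ∑ ν : Fin K, wgt E pbar t ν = ∑ e ∈ E, pbar t e.1 e.2 := by
  simp only [wgt, Nin, Finset.sum_filter]
  rw [Finset.sum_comm,
    show (∑ e ∈ E, pbar t e.1 e.2) = ∑ x : Fin K × Fin K, if x ∈ E then pbar t x.1 x.2 else 0
      from by rw [Finset.sum_ite_mem, Finset.univ_inter],
    Fintype.sum_prod_type]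

end aux2

section aux3
variable {K d : ℕ} {E : Finset (Fin K × Fin K)} {pbar : ℕ → Fin K → Fin K → ℝ} {α : ℝ}

lemma Pbar_nonneg {t : ℕ} (hpα : ∀ m ν₀ : Fin K, (m, ν₀) ∈ E → α ≤ pbar t m ν₀)
    (hα : 0 < α) : ∀ i j, 0 ≤ Pbar E pbar t i j := by
  intro i j
  simp only [Pbar, Matrix.of_apply]
  split_ifs with h1 h2 h3
  · exact div_nonneg (le_trans hα.le (hpα j i (mem_Nin_iff.mp h2)))
      (le_trans hα.le (wgt_ge hpα hα.le h1))
  · rfl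
  · norm_num
  · rfl

lemma Pbar_rowsum {t : ℕ} (hpα : ∀ m ν₀ : Fin K, (m, ν₀) ∈ E → α ≤ pbar t m ν₀)
    (hα : 0 < α) : ∀ i, ∑ j, Pbar E pbar t i j = 1 := by
  intro i
  simp only [Pbar, Matrix.of_apply]
  by_cases h : i ∈ Ml E
  · simp only [h, if_true]
    rw [Finset.sum_ite_mem, Finset.univ_inter, ← Finset.sum_div]
    exact div_self (ne_of_gt (lt_of_lt_of_le hα (wgt_ge hpα hα.le h)))
  · simp [h]

lemma Jmat_mem_nonneg {P : ℕ → Matrix (Fin K) (Fin K) ℝ} {t s : ℕ}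
    (h : ∀ r, s ≤ r → r ≤ t → ∀ i j, 0 ≤ P r i j) : ∀ i j, 0 ≤ Jmat P t s i j := by
  apply listprod_nonneg
  intro A hA
  simp only [List.mem_map, List.mem_reverse, List.mem_range'_1] at hA
  obtain ⟨r, ⟨hr1, hr2⟩, rfl⟩ := hA
  exact h r hr1 (by omega)

lemma Jmat_mem_rowsum {P : ℕ → Matrix (Fin K) (Fin K) ℝ} {t s : ℕ}
    (h : ∀ r, s ≤ r → r ≤ t → ∀ i, ∑ j, P r i j = 1) : ∀ i, ∑ j, Jmat P t s i j = 1 := by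
  apply listprod_rowsum
  intro A hA
  simp only [List.mem_map, List.mem_reverse, List.mem_range'_1] at hA
  obtain ⟨r, ⟨hr1, hr2⟩, rfl⟩ := hA
  exact h r hr1 (by omega)

lemma sum_Sigma0_diag (Mnature : Finset (Fin K)) (p0 : Fin K → ℝ)
    (Vstar : Matrix (Fin d) (Fin d) ℝ) (ν1 ν2 : Fin K) :
    ∑ a : Fin d, Sigma0 Mnature p0 Vstar (ν1, a) (ν2, a)
      = if ν1 = ν2 ∧ ν1 ∉ Mnature then (1 / p0 ν1) * Vstar.trace else 0 := by
  simp only [Sigma0, Matrix.of_apply, Matrix.trace, Matrix.diag]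
  split_ifs with h <;> simp [Finset.mul_sum]

lemma sum_Vt_diag (q : ℕ → Fin K → Fin K → ℝ) (Vstar : Matrix (Fin d) (Fin d) ℝ)
    (t : ℕ) (ν1 ν2 : Fin K) :
    ∑ a : Fin d, Vt E pbar q Vstar t (ν1, a) (ν2, a)
      = if ν1 ∈ Ml E ∧ ν2 ∈ Ml E then
          (q t ν1 ν2 / (wgt E pbar t ν1 * wgt E pbar t ν2)) * Vstar.trace else 0 := by
  simp only [Vt, Matrix.of_apply, Matrix.trace, Matrix.diag]
  split_ifs with h <;> simp [Finset.mul_sum]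

end aux3


section aux4
variable {K d : ℕ} {E : Finset (Fin K × Fin K)}

lemma collapse_Sigma0 (A : Matrix (Fin K) (Fin K) ℝ) (Mnature : Finset (Fin K))
    (p0 : Fin K → ℝ) (tr : ℝ) (μ : Fin K) :
    ∑ ν1 : Fin K, ∑ ν2 : Fin K, A μ ν1 * A μ ν2 *
        (if ν1 = ν2 ∧ ν1 ∉ Mnature then (1 / p0 ν1) * tr else 0)
      = (∑ ν ∈ Finset.univ \ Mnature, (A μ ν) ^ 2 * (1 / p0 ν)) * tr := by
  have h1 : ∀ ν1 : Fin K, (∑ ν2 : Fin K, A μ ν1 * A μ ν2 *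
      (if ν1 = ν2 ∧ ν1 ∉ Mnature then (1 / p0 ν1) * tr else 0))
      = if ν1 ∉ Mnature then (A μ ν1) ^ 2 * (1 / p0 ν1) * tr else 0 := by
    intro ν1
    rw [Finset.sum_eq_single ν1]
    · by_cases h : ν1 ∈ Mnature <;> simp [h] <;> ring
    · intro b _ hb
      rw [if_neg (by exact fun h => hb h.1.symm), mul_zero]
    · simp
  simp only [h1]
  rw [show (Finset.univ \ Mnature) = Finset.univ.filter (fun ν => ν ∉ Mnature) from by
    ext x; simp, Finset.sum_filter, Finset.sum_mul]
  exact Finset.sum_congr rfl fun x _ => by split_ifs <;> simp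

lemma collapse_Vt (A : Matrix (Fin K) (Fin K) ℝ) (f : Fin K → Fin K → ℝ) (tr : ℝ) (μ : Fin K) :
    ∑ ν1 : Fin K, ∑ ν2 : Fin K, A μ ν1 * A μ ν2 *
        (if ν1 ∈ Ml E ∧ ν2 ∈ Ml E then f ν1 ν2 * tr else 0)
      = (∑ ν1 ∈ Ml E, ∑ ν2 ∈ Ml E, A μ ν1 * A μ ν2 * f ν1 ν2) * tr := by
  have h1 : ∀ ν1 : Fin K, (∑ ν2 : Fin K, A μ ν1 * A μ ν2 *
        (if ν1 ∈ Ml E ∧ ν2 ∈ Ml E then f ν1 ν2 * tr else 0))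
      = if ν1 ∈ Ml E then (∑ ν2 ∈ Ml E, A μ ν1 * A μ ν2 * f ν1 ν2) * tr else 0 := by
    intro ν1
    by_cases hm : ν1 ∈ Ml E
    · rw [if_pos hm, Finset.sum_mul,
        show (Ml E) = Finset.univ.filter (fun ν => ν ∈ Ml E) from by ext x; simp,
        Finset.sum_filter]
      refine Finset.sum_congr rfl fun ν2 _ => ?_
      by_cases h2 : ν2 ∈ Ml E <;> simp [hm, h2] <;> ring
    · simp [hm]
  simp only [h1]
  rw [show (Ml E) = Finset.univ.filter (fun ν => ν ∈ Ml E) from by ext x; simp,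
    Finset.sum_filter, Finset.sum_mul]
  simp

end aux4

/-- For every `μ ∈ M_l` and `T ≥ 1`, with
`S_T = ∑_{t=1}^T (∑_{ν∈M_l} J̄_{T,t+1,μ,ν})²`, the asymptotic risk ratio satisfies
`α·S_T ≤ Tr(Σ_{T,μ,μ})/Tr(V*) ≤ (ᾱ/α)·(S_T + 1)`; in particular the risk ratio is
unbounded (limsup `= ∞`) iff `S_T` is unbounded. -/
theorem stmt6
    {K d : ℕ} (hK : 1 ≤ K) (hd : 1 ≤ d)
    (E : Finset (Fin K × Fin K))
    (α ᾱ : ℝ) (hα0 : 0 < α) (hα1 : α ≤ 1) (hᾱ : 1 ≤ ᾱ)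
    (Mnature : Finset (Fin K)) (hMnat : Mnature ⊆ Mu E)
    (Vstar : Matrix (Fin d) (Fin d) ℝ) (hVpsd : Vstar.PosSemidef) (hVtr : 0 < Vstar.trace)
    (c : ℕ → ℝ) (hc : ∀ t, 0 < c t)
    (hb : ∀ t s : ℕ, α ≤ c t / c s ∧ c t / c s ≤ ᾱ)
    (pbar : ℕ → Fin K → Fin K → ℝ)
    (hpbarα : ∀ t, 1 ≤ t → ∀ ν μ : Fin K, (ν, μ) ∈ E → α ≤ pbar t ν μ)
    (hpbarsum : ∀ t, 1 ≤ t → ∑ e ∈ E, pbar t e.1 e.2 ≤ 1)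
    (p0 : Fin K → ℝ) (hp0α : ∀ μ ∉ Mnature, α ≤ p0 μ)
    (hp0sum : ∑ μ ∈ Finset.univ \ Mnature, p0 μ ≤ 1)
    (q : ℕ → Fin K → Fin K → ℝ)
    (hqsymm : ∀ t, 1 ≤ t → ∀ ν₁ ∈ Ml E, ∀ ν₂ ∈ Ml E, q t ν₁ ν₂ = q t ν₂ ν₁)
    (hqnn : ∀ t, 1 ≤ t → ∀ ν₁ ∈ Ml E, ∀ ν₂ ∈ Ml E, 0 ≤ q t ν₁ ν₂)
    (hqle : ∀ t, 1 ≤ t → ∀ ν₁ ∈ Ml E, ∀ ν₂ ∈ Ml E,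
      q t ν₁ ν₂ ≤ min (wgt E pbar t ν₁) (wgt E pbar t ν₂))
    (hqdiag : ∀ t, 1 ≤ t → ∀ ν ∈ Ml E, q t ν ν = wgt E pbar t ν)
    (Sig : ℕ → Matrix (Fin K × Fin d) (Fin K × Fin d) ℝ)
    (hSig0 : Sig 0 = Sigma0 Mnature p0 Vstar)
    (hSigrec : ∀ t, 1 ≤ t → Sig t =
      (c t / c (t - 1)) • (kronId (Pbar E pbar t) * Sig (t - 1) * (kronId (Pbar E pbar t))ᵀ)
        + Vt E pbar q Vstar t) :
    ∀ μ ∈ Ml E,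
      (∀ T : ℕ, 1 ≤ T →
        α * (∑ t ∈ Finset.Icc 1 T, (∑ ν ∈ Ml E, Jmat (Pbar E pbar) T (t + 1) μ ν) ^ 2) ≤
            (∑ a : Fin d, Sig T (μ, a) (μ, a)) / Vstar.trace ∧
          (∑ a : Fin d, Sig T (μ, a) (μ, a)) / Vstar.trace ≤
            (ᾱ / α) *
              ((∑ t ∈ Finset.Icc 1 T, (∑ ν ∈ Ml E, Jmat (Pbar E pbar) T (t + 1) μ ν) ^ 2) + 1)) ∧
      (¬ BddAbove (Set.range fun T : ℕ => (∑ a : Fin d, Sig T (μ, a) (μ, a)) / Vstar.trace) ↔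
        ¬ BddAbove (Set.range fun T : ℕ =>
          ∑ t ∈ Finset.Icc 1 T, (∑ ν ∈ Ml E, Jmat (Pbar E pbar) T (t + 1) μ ν) ^ 2)) := by
  intro μ hμ
  have hPnn : ∀ r, 1 ≤ r → ∀ i j, 0 ≤ Pbar E pbar r i j :=
    fun r hr => Pbar_nonneg (fun m ν h => hpbarα r hr m ν h) hα0
  have hProw : ∀ r, 1 ≤ r → ∀ i, ∑ j, Pbar E pbar r i j = 1 :=
    fun r hr => Pbar_rowsum (fun m ν h => hpbarα r hr m ν h) hα0
  have hJnn : ∀ t s, 1 ≤ s → ∀ i j, 0 ≤ Jmat (Pbar E pbar) t s i j :=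
    fun t s hs => Jmat_mem_nonneg (fun r hr _ => hPnn r (le_trans hs hr))
  have hJrow : ∀ t s, 1 ≤ s → ∀ i, ∑ j, Jmat (Pbar E pbar) t s i j = 1 :=
    fun t s hs => Jmat_mem_rowsum (fun r hr _ => hProw r (le_trans hs hr))
  have hJle1 : ∀ t s, 1 ≤ s → ∀ i j, Jmat (Pbar E pbar) t s i j ≤ 1 := by
    intro t s hs i j
    calc Jmat (Pbar E pbar) t s i j ≤ ∑ k, Jmat (Pbar E pbar) t s i k :=
          Finset.single_le_sum (fun k _ => hJnn t s hs i k) (Finset.mem_univ j)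
      _ = 1 := hJrow t s hs i
  have closed : ∀ T : ℕ, Sig T =
      (c T / c 0) • (kronId (Jmat (Pbar E pbar) T 1) * Sigma0 Mnature p0 Vstar *
          (kronId (Jmat (Pbar E pbar) T 1))ᵀ)
        + ∑ t ∈ Finset.Icc 1 T,
          (c T / c t) • (kronId (Jmat (Pbar E pbar) T (t + 1)) * Vt E pbar q Vstar t *
            (kronId (Jmat (Pbar E pbar) T (t + 1)))ᵀ) := by
    intro T
    induction T with
    | zero =>
        rw [hSig0, Finset.Icc_eq_empty (by omega), Finset.sum_empty, add_zero,
          show Jmat (Pbar E pbar) 0 1 = 1 from Jmat_self _ 0, kronId_one,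
          div_self (hc 0).ne', one_smul, Matrix.transpose_one, Matrix.mul_one, Matrix.one_mul]
    | succ T ih =>
        have hrec := hSigrec (T + 1) (by omega)
        simp only [Nat.add_sub_cancel] at hrec
        have conj : ∀ s : ℕ, s ≤ T + 1 → ∀ M : Matrix (Fin K × Fin d) (Fin K × Fin d) ℝ,
            kronId (Pbar E pbar (T + 1)) *
                (kronId (Jmat (Pbar E pbar) T s) * M * (kronId (Jmat (Pbar E pbar) T s))ᵀ) *
                (kronId (Pbar E pbar (T + 1)))ᵀ
              = kronId (Jmat (Pbar E pbar) (T + 1) s) * M *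
                  (kronId (Jmat (Pbar E pbar) (T + 1) s))ᵀ := by
          intro s hs M
          rw [Jmat_succ _ hs, kronId_mul, Matrix.transpose_mul]
          simp only [Matrix.mul_assoc]
        have hscal : ∀ s : ℕ, c (T + 1) / c T * (c T / c s) = c (T + 1) / c s := by
          intro s
          field_simp
          rw [mul_comm (c (T + 1)) (c T), mul_div_mul_left _ _ (hc T).ne']
        have htop : (c (T + 1) / c (T + 1)) •
            (kronId (Jmat (Pbar E pbar) (T + 1) (T + 1 + 1)) * Vt E pbar q Vstar (T + 1) *
              (kronId (Jmat (Pbar E pbar) (T + 1) (T + 1 + 1)))ᵀ) = Vt E pbar q Vstar (T + 1) := by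
          rw [show Jmat (Pbar E pbar) (T + 1) (T + 1 + 1) = 1 from Jmat_self _ (T + 1),
            kronId_one, Matrix.transpose_one, Matrix.mul_one, Matrix.one_mul,
            div_self (hc (T + 1)).ne', one_smul]
        have hfirst : (c (T + 1) / c T) • (kronId (Pbar E pbar (T + 1)) *
              ((c T / c 0) • (kronId (Jmat (Pbar E pbar) T 1) * Sigma0 Mnature p0 Vstar *
                (kronId (Jmat (Pbar E pbar) T 1))ᵀ)) * (kronId (Pbar E pbar (T + 1)))ᵀ)
            = (c (T + 1) / c 0) • (kronId (Jmat (Pbar E pbar) (T + 1) 1) *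
                Sigma0 Mnature p0 Vstar * (kronId (Jmat (Pbar E pbar) (T + 1) 1))ᵀ) := by
          rw [Matrix.mul_smul, Matrix.smul_mul, smul_smul, hscal 0, conj 1 (by omega)]
        have hterm : ∀ x ∈ Finset.Icc 1 T, (c (T + 1) / c T) • (kronId (Pbar E pbar (T + 1)) *
              ((c T / c x) • (kronId (Jmat (Pbar E pbar) T (x + 1)) * Vt E pbar q Vstar x *
                (kronId (Jmat (Pbar E pbar) T (x + 1)))ᵀ)) * (kronId (Pbar E pbar (T + 1)))ᵀ)
            = (c (T + 1) / c x) • (kronId (Jmat (Pbar E pbar) (T + 1) (x + 1)) *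
                Vt E pbar q Vstar x * (kronId (Jmat (Pbar E pbar) (T + 1) (x + 1)))ᵀ) := by
          intro x hx
          have hx' : x + 1 ≤ T + 1 := by
            have := (Finset.mem_Icc.mp hx).2; omega
          rw [Matrix.mul_smul, Matrix.smul_mul, smul_smul, hscal x, conj (x + 1) hx']
        rw [hrec, ih, Matrix.mul_add, Matrix.add_mul, smul_add, Finset.mul_sum,
          Finset.sum_mul, Finset.smul_sum, Finset.sum_Icc_succ_top (by omega : 1 ≤ T + 1),
          htop, hfirst, Finset.sum_congr rfl hterm, add_assoc]
  have traceG : ∀ T : ℕ, (∑ a : Fin d, Sig T (μ, a) (μ, a)) =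
      ((c T / c 0) * (∑ ν ∈ Finset.univ \ Mnature, (Jmat (Pbar E pbar) T 1 μ ν) ^ 2 * (1 / p0 ν))
        + ∑ t ∈ Finset.Icc 1 T, (c T / c t) *
            (∑ ν1 ∈ Ml E, ∑ ν2 ∈ Ml E, Jmat (Pbar E pbar) T (t + 1) μ ν1 *
              Jmat (Pbar E pbar) T (t + 1) μ ν2 *
              (q t ν1 ν2 / (wgt E pbar t ν1 * wgt E pbar t ν2)))) * Vstar.trace := by
    intro T
    rw [closed T]
    simp only [Matrix.add_apply, Matrix.smul_apply, Matrix.sum_apply, smul_eq_mul]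
    rw [Finset.sum_add_distrib, add_mul]
    congr 1
    · rw [← Finset.mul_sum, conj_trace]
      simp only [sum_Sigma0_diag]
      rw [collapse_Sigma0, mul_assoc]
    · rw [Finset.sum_comm]
      rw [Finset.sum_mul]
      refine Finset.sum_congr rfl fun t _ => ?_
      rw [← Finset.mul_sum, conj_trace]
      simp only [sum_Vt_diag]
      rw [collapse_Vt, mul_assoc]
  have hwge' : ∀ t, 1 ≤ t → ∀ ν ∈ Ml E, α ≤ wgt E pbar t ν :=
    fun t ht ν hν => wgt_ge (fun m ν0 h => hpbarα t ht m ν0 h) hα0.le hν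
  have hwpos : ∀ t, 1 ≤ t → ∀ ν ∈ Ml E, 0 < wgt E pbar t ν :=
    fun t ht ν hν => lt_of_lt_of_le hα0 (hwge' t ht ν hν)
  have hwnn : ∀ t, 1 ≤ t → ∀ ν : Fin K, 0 ≤ wgt E pbar t ν := fun t ht ν =>
    Finset.sum_nonneg fun m hm => le_trans hα0.le (hpbarα t ht m ν (mem_Nin_iff.mp hm))
  have hwsum : ∀ t, 1 ≤ t → ∑ ν ∈ Ml E, wgt E pbar t ν ≤ 1 := by
    intro t ht
    calc ∑ ν ∈ Ml E, wgt E pbar t ν ≤ ∑ ν : Fin K, wgt E pbar t ν :=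
          Finset.sum_le_sum_of_subset_of_nonneg (Finset.subset_univ _) (fun ν _ _ => hwnn t ht ν)
      _ = ∑ e ∈ E, pbar t e.1 e.2 := wgt_total t
      _ ≤ 1 := hpbarsum t ht
  have hQlb : ∀ T t, 1 ≤ t →
      (∑ ν ∈ Ml E, Jmat (Pbar E pbar) T (t + 1) μ ν) ^ 2 ≤
        ∑ ν1 ∈ Ml E, ∑ ν2 ∈ Ml E, Jmat (Pbar E pbar) T (t + 1) μ ν1 *
          Jmat (Pbar E pbar) T (t + 1) μ ν2 *
          (q t ν1 ν2 / (wgt E pbar t ν1 * wgt E pbar t ν2)) := by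
    intro T t ht
    have hd1 : (∑ ν ∈ Ml E, Jmat (Pbar E pbar) T (t + 1) μ ν) ^ 2 ≤
        ∑ ν ∈ Ml E, (Jmat (Pbar E pbar) T (t + 1) μ ν) ^ 2 / wgt E pbar t ν := by
      have h1 := Finset.sq_sum_div_le_sum_sq_div (Ml E)
        (fun ν => Jmat (Pbar E pbar) T (t + 1) μ ν) (hwpos t ht)
      have hspos : 0 < ∑ ν ∈ Ml E, wgt E pbar t ν := Finset.sum_pos (hwpos t ht) ⟨μ, hμ⟩
      calc (∑ ν ∈ Ml E, Jmat (Pbar E pbar) T (t + 1) μ ν) ^ 2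
          ≤ (∑ ν ∈ Ml E, Jmat (Pbar E pbar) T (t + 1) μ ν) ^ 2 /
              ∑ ν ∈ Ml E, wgt E pbar t ν := by
            rw [le_div_iff₀ hspos]
            exact mul_le_of_le_one_right (sq_nonneg _) (hwsum t ht)
        _ ≤ _ := h1
    refine le_trans hd1 (Finset.sum_le_sum fun ν1 hν1 => ?_)
    have hterm : ∀ ν2 ∈ Ml E, 0 ≤ Jmat (Pbar E pbar) T (t + 1) μ ν1 *
        Jmat (Pbar E pbar) T (t + 1) μ ν2 *
        (q t ν1 ν2 / (wgt E pbar t ν1 * wgt E pbar t ν2)) := fun ν2 hν2 =>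
      mul_nonneg (mul_nonneg (hJnn T (t + 1) le_add_self μ ν1) (hJnn T (t + 1) le_add_self μ ν2))
        (div_nonneg (hqnn t ht ν1 hν1 ν2 hν2) (mul_nonneg (hwnn t ht ν1) (hwnn t ht ν2)))
    refine le_trans (le_of_eq ?_) (Finset.single_le_sum hterm hν1)
    rw [hqdiag t ht ν1 hν1]
    have hw0 : wgt E pbar t ν1 ≠ 0 := (hwpos t ht ν1 hν1).ne'
    field_simp
  have hQub : ∀ T t, 1 ≤ t →
      (∑ ν1 ∈ Ml E, ∑ ν2 ∈ Ml E, Jmat (Pbar E pbar) T (t + 1) μ ν1 *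
          Jmat (Pbar E pbar) T (t + 1) μ ν2 *
          (q t ν1 ν2 / (wgt E pbar t ν1 * wgt E pbar t ν2))) ≤
        (1 / α) * (∑ ν ∈ Ml E, Jmat (Pbar E pbar) T (t + 1) μ ν) ^ 2 := by
    intro T t ht
    have step : ∀ ν1 ∈ Ml E, ∀ ν2 ∈ Ml E,
        Jmat (Pbar E pbar) T (t + 1) μ ν1 * Jmat (Pbar E pbar) T (t + 1) μ ν2 *
          (q t ν1 ν2 / (wgt E pbar t ν1 * wgt E pbar t ν2)) ≤
        Jmat (Pbar E pbar) T (t + 1) μ ν1 * Jmat (Pbar E pbar) T (t + 1) μ ν2 * (1 / α) := by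
      intro ν1 hν1 ν2 hν2
      refine mul_le_mul_of_nonneg_left ?_
        (mul_nonneg (hJnn T (t + 1) le_add_self μ ν1) (hJnn T (t + 1) le_add_self μ ν2))
      have hw1 := hwpos t ht ν1 hν1
      have hw2 := hwpos t ht ν2 hν2
      calc q t ν1 ν2 / (wgt E pbar t ν1 * wgt E pbar t ν2)
          ≤ wgt E pbar t ν2 / (wgt E pbar t ν1 * wgt E pbar t ν2) := by
            have hqw : q t ν1 ν2 ≤ wgt E pbar t ν2 :=
              (hqle t ht ν1 hν1 ν2 hν2).trans (min_le_right _ _)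
            gcongr
        _ = 1 / wgt E pbar t ν1 := by
            rw [mul_comm]
            rw [div_mul_eq_div_div]
            rw [div_self hw2.ne']
        _ ≤ 1 / α := one_div_le_one_div_of_le hα0 (hwge' t ht ν1 hν1)
    calc (∑ ν1 ∈ Ml E, ∑ ν2 ∈ Ml E, Jmat (Pbar E pbar) T (t + 1) μ ν1 *
            Jmat (Pbar E pbar) T (t + 1) μ ν2 *
            (q t ν1 ν2 / (wgt E pbar t ν1 * wgt E pbar t ν2)))
        ≤ ∑ ν1 ∈ Ml E, ∑ ν2 ∈ Ml E, Jmat (Pbar E pbar) T (t + 1) μ ν1 *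
            Jmat (Pbar E pbar) T (t + 1) μ ν2 * (1 / α) :=
          Finset.sum_le_sum fun ν1 hν1 => Finset.sum_le_sum fun ν2 hν2 => step ν1 hν1 ν2 hν2
      _ = (1 / α) * (∑ ν ∈ Ml E, Jmat (Pbar E pbar) T (t + 1) μ ν) ^ 2 := by
          rw [pow_two, Finset.sum_mul_sum, Finset.mul_sum]
          exact Finset.sum_congr rfl fun ν1 _ => by
            rw [Finset.mul_sum]
            exact Finset.sum_congr rfl fun ν2 _ => by ring
  have hDnn : ∀ T : ℕ,
      0 ≤ ∑ ν ∈ Finset.univ \ Mnature, (Jmat (Pbar E pbar) T 1 μ ν) ^ 2 * (1 / p0 ν) := by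
    intro T
    refine Finset.sum_nonneg fun ν hν => mul_nonneg (sq_nonneg _) ?_
    have := hp0α ν (Finset.mem_sdiff.mp hν).2
    exact one_div_nonneg.mpr (le_trans hα0.le this)
  have hDle : ∀ T : ℕ, 1 ≤ T →
      (∑ ν ∈ Finset.univ \ Mnature, (Jmat (Pbar E pbar) T 1 μ ν) ^ 2 * (1 / p0 ν)) ≤ 1 / α := by
    intro T hT
    calc (∑ ν ∈ Finset.univ \ Mnature, (Jmat (Pbar E pbar) T 1 μ ν) ^ 2 * (1 / p0 ν))
        ≤ ∑ ν ∈ Finset.univ \ Mnature, (Jmat (Pbar E pbar) T 1 μ ν) ^ 2 * (1 / α) :=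
          Finset.sum_le_sum fun ν hν => mul_le_mul_of_nonneg_left
            (one_div_le_one_div_of_le hα0 (hp0α ν (Finset.mem_sdiff.mp hν).2)) (sq_nonneg _)
      _ ≤ ∑ ν : Fin K, (Jmat (Pbar E pbar) T 1 μ ν) ^ 2 * (1 / α) :=
          Finset.sum_le_sum_of_subset_of_nonneg (Finset.subset_univ _)
            (fun ν _ _ => mul_nonneg (sq_nonneg _) (one_div_nonneg.mpr hα0.le))
      _ ≤ ∑ ν : Fin K, Jmat (Pbar E pbar) T 1 μ ν * (1 / α) := by
          refine Finset.sum_le_sum fun ν _ => mul_le_mul_of_nonneg_right ?_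
            (one_div_nonneg.mpr hα0.le)
          have h1 := hJnn T 1 le_rfl μ ν
          have h2 := hJle1 T 1 le_rfl μ ν
          nlinarith
      _ = 1 / α := by rw [← Finset.sum_mul, hJrow T 1 le_rfl, one_mul]
  have ratio_eq : ∀ T : ℕ, (∑ a : Fin d, Sig T (μ, a) (μ, a)) / Vstar.trace =
      (c T / c 0) * (∑ ν ∈ Finset.univ \ Mnature, (Jmat (Pbar E pbar) T 1 μ ν) ^ 2 * (1 / p0 ν))
        + ∑ t ∈ Finset.Icc 1 T, (c T / c t) *
            (∑ ν1 ∈ Ml E, ∑ ν2 ∈ Ml E, Jmat (Pbar E pbar) T (t + 1) μ ν1 *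
              Jmat (Pbar E pbar) T (t + 1) μ ν2 *
              (q t ν1 ν2 / (wgt E pbar t ν1 * wgt E pbar t ν2))) := by
    intro T
    rw [traceG T, mul_div_assoc, div_self hVtr.ne', mul_one]
  have sand : ∀ T : ℕ, 1 ≤ T →
      α * (∑ t ∈ Finset.Icc 1 T, (∑ ν ∈ Ml E, Jmat (Pbar E pbar) T (t + 1) μ ν) ^ 2) ≤
          (∑ a : Fin d, Sig T (μ, a) (μ, a)) / Vstar.trace ∧
        (∑ a : Fin d, Sig T (μ, a) (μ, a)) / Vstar.trace ≤
          (ᾱ / α) *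
            ((∑ t ∈ Finset.Icc 1 T, (∑ ν ∈ Ml E, Jmat (Pbar E pbar) T (t + 1) μ ν) ^ 2) + 1) := by
    intro T hT
    rw [ratio_eq T]
    constructor
    · have h1 : 0 ≤ (c T / c 0) *
          (∑ ν ∈ Finset.univ \ Mnature, (Jmat (Pbar E pbar) T 1 μ ν) ^ 2 * (1 / p0 ν)) :=
        mul_nonneg (le_trans hα0.le (hb T 0).1) (hDnn T)
      calc α * (∑ t ∈ Finset.Icc 1 T, (∑ ν ∈ Ml E, Jmat (Pbar E pbar) T (t + 1) μ ν) ^ 2)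
          = ∑ t ∈ Finset.Icc 1 T,
              α * (∑ ν ∈ Ml E, Jmat (Pbar E pbar) T (t + 1) μ ν) ^ 2 := Finset.mul_sum _ _ _
        _ ≤ ∑ t ∈ Finset.Icc 1 T, (c T / c t) *
              (∑ ν1 ∈ Ml E, ∑ ν2 ∈ Ml E, Jmat (Pbar E pbar) T (t + 1) μ ν1 *
                Jmat (Pbar E pbar) T (t + 1) μ ν2 *
                (q t ν1 ν2 / (wgt E pbar t ν1 * wgt E pbar t ν2))) := by
            refine Finset.sum_le_sum fun t ht' => ?_
            have ht1 : 1 ≤ t := (Finset.mem_Icc.mp ht').1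
            have hQnn' := le_trans (sq_nonneg _) (hQlb T t ht1)
            calc α * (∑ ν ∈ Ml E, Jmat (Pbar E pbar) T (t + 1) μ ν) ^ 2
                ≤ α * _ := mul_le_mul_of_nonneg_left (hQlb T t ht1) hα0.le
              _ ≤ (c T / c t) * _ := mul_le_mul_of_nonneg_right (hb T t).1 hQnn'
        _ ≤ _ := le_add_of_nonneg_left h1
    · have h1 : (c T / c 0) *
          (∑ ν ∈ Finset.univ \ Mnature, (Jmat (Pbar E pbar) T 1 μ ν) ^ 2 * (1 / p0 ν))
          ≤ ᾱ * (1 / α) :=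
        mul_le_mul (hb T 0).2 (hDle T hT) (hDnn T) (le_trans zero_le_one hᾱ)
      have h2 : ∀ t ∈ Finset.Icc 1 T, (c T / c t) *
          (∑ ν1 ∈ Ml E, ∑ ν2 ∈ Ml E, Jmat (Pbar E pbar) T (t + 1) μ ν1 *
            Jmat (Pbar E pbar) T (t + 1) μ ν2 *
            (q t ν1 ν2 / (wgt E pbar t ν1 * wgt E pbar t ν2)))
          ≤ ᾱ * ((1 / α) * (∑ ν ∈ Ml E, Jmat (Pbar E pbar) T (t + 1) μ ν) ^ 2) := by
        intro t ht'
        have ht1 : 1 ≤ t := (Finset.mem_Icc.mp ht').1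
        have hQnn' := le_trans (sq_nonneg _) (hQlb T t ht1)
        exact mul_le_mul (hb T t).2 (hQub T t ht1) hQnn' (le_trans zero_le_one hᾱ)
      calc _ ≤ ᾱ * (1 / α) + ∑ t ∈ Finset.Icc 1 T,
              ᾱ * ((1 / α) * (∑ ν ∈ Ml E, Jmat (Pbar E pbar) T (t + 1) μ ν) ^ 2) :=
            add_le_add h1 (Finset.sum_le_sum h2)
        _ = ᾱ * (1 / α) + (ᾱ * (1 / α)) *
              ∑ t ∈ Finset.Icc 1 T, (∑ ν ∈ Ml E, Jmat (Pbar E pbar) T (t + 1) μ ν) ^ 2 := by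
            rw [Finset.mul_sum]
            congr 1
            exact Finset.sum_congr rfl fun t _ => by ring
        _ = (ᾱ / α) *
              ((∑ t ∈ Finset.Icc 1 T, (∑ ν ∈ Ml E, Jmat (Pbar E pbar) T (t + 1) μ ν) ^ 2) + 1) := by
            ring
  refine ⟨sand, ?_⟩
  rw [not_iff_not]
  constructor
  · rintro ⟨B, hB⟩
    refine ⟨max 0 (B / α), ?_⟩
    rintro y ⟨T, rfl⟩
    rcases Nat.eq_zero_or_pos T with h0 | h1
    · subst h0
      simp only [show Finset.Icc 1 0 = (∅ : Finset ℕ) from Finset.Icc_eq_empty (by omega),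
        Finset.sum_empty]
      exact le_max_left _ _
    · have hR : (∑ a : Fin d, Sig T (μ, a) (μ, a)) / Vstar.trace ≤ B :=
        hB (Set.mem_range_self T)
      have hlow := (sand T h1).1
      have hS : (∑ t ∈ Finset.Icc 1 T, (∑ ν ∈ Ml E, Jmat (Pbar E pbar) T (t + 1) μ ν) ^ 2)
          ≤ B / α := by
        rw [le_div_iff₀ hα0]
        nlinarith
      exact le_trans hS (le_max_right _ _)
  · rintro ⟨B, hB⟩
    refine ⟨max ((∑ a : Fin d, Sig 0 (μ, a) (μ, a)) / Vstar.trace) ((ᾱ / α) * (B + 1)), ?_⟩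
    rintro y ⟨T, rfl⟩
    rcases Nat.eq_zero_or_pos T with h0 | h1
    · subst h0
      exact le_max_left _ _
    · have hS : (∑ t ∈ Finset.Icc 1 T, (∑ ν ∈ Ml E, Jmat (Pbar E pbar) T (t + 1) μ ν) ^ 2)
          ≤ B := hB (Set.mem_range_self T)
      have hup := (sand T h1).2
      have hαα : 0 ≤ ᾱ / α := div_nonneg (le_trans zero_le_one hᾱ) hα0.le
      have : (∑ a : Fin d, Sig T (μ, a) (μ, a)) / Vstar.trace ≤ (ᾱ / α) * (B + 1) :=
        le_trans hup (mul_le_mul_of_nonneg_left (by linarith) hαα)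
      exact le_trans this (le_max_right _ _)
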